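/- Let H and Ĥ = H + E be real matrices of the same dimensions, both of full row rank. Then ‖Ĥ† − H†‖₂ ≤ 2·max{‖Ĥ†‖₂², ‖H†‖₂²}·‖E‖₂, where † denotes the Moore–Penrose pseudoinverse. -/

import Mathlib

/-!
Stewart's decomposition: writing `Ĥ = H + E`,
`Ĥ† − H† = −Ĥ† E H† + (1 − Ĥ†Ĥ) Eᵀ (H Hᵀ)⁻¹`,
which uses only `H H† = 1` and `(1 − Ĥ†Ĥ) Ĥᵀ = 0`. The first term has norm at most
`‖Ĥ†‖ ‖E‖ ‖H†‖`. In the second, `1 − Ĥ†Ĥ` is an orthogonal projection, so has norm at most `1`,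
and `(H Hᵀ)⁻¹ = H†ᵀ H†` has norm at most `‖H†‖²`. Both bounds are at most
`max {‖Ĥ†‖², ‖H†‖²} ‖E‖`.
-/

/-- Euclidean (ℓ²) norm of a finite real vector. -/
noncomputable def euclNorm {n : Type*} [Fintype n] (x : n → ℝ) : ℝ :=
  ‖(WithLp.equiv 2 (n → ℝ)).symm x‖

/-- Spectral norm (operator norm induced by the Euclidean norm) of a real matrix. -/
noncomputable def specNorm {m n : Type*} [Fintype m] [Fintype n] (M : Matrix m n ℝ) : ℝ :=
  ⨆ v : {v : n → ℝ // euclNorm v ≤ 1}, euclNorm (M.mulVec v.1)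

/-- Smallest singular value of a real matrix `M`, computed as
`min_{‖v‖ = 1} ‖Mᵀ v‖` (the transpose formulation). -/
noncomputable def sigmaMin {m n : Type*} [Fintype m] [Fintype n] (M : Matrix m n ℝ) : ℝ :=
  ⨅ v : {v : m → ℝ // euclNorm v = 1}, euclNorm (M.transpose.mulVec v.1)

/-- Moore–Penrose pseudoinverse of a full-row-rank matrix: `M† = Mᵀ (M Mᵀ)⁻¹`. -/
noncomputable def pinvFR {m n : Type*} [Fintype m] [Fintype n] [DecidableEq m]
    (M : Matrix m n ℝ) : Matrix n m ℝ :=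
  M.transpose * (M * M.transpose)⁻¹

theorem test : True := trivial

open scoped Matrix.Norms.L2Operator
open Matrix

theorem specNorm_eq_l2_opNorm {m n : Type*} [Fintype m] [Fintype n] [DecidableEq n]
    (M : Matrix m n ℝ) : specNorm M = ‖M‖ := by
  rw [l2_opNorm_def, ← ContinuousLinearMap.sSup_unitClosedBall_eq_norm, specNorm, iSup]
  congr 1
  ext r
  constructor
  · rintro ⟨⟨v, hv⟩, rfl⟩
    exact ⟨(WithLp.equiv 2 (n → ℝ)).symm v, mem_closedBall_zero_iff.2 hv, rfl⟩
  · rintro ⟨x, hx, rfl⟩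
    exact ⟨⟨WithLp.equiv 2 (n → ℝ) x, by simpa [euclNorm] using hx⟩, rfl⟩

theorem mul_le_max_sq {a b : ℝ} : a * b ≤ max (a ^ 2) (b ^ 2) := by
  linarith [two_mul_le_add_sq a b, le_max_left (a ^ 2) (b ^ 2), le_max_right (a ^ 2) (b ^ 2)]

namespace Matrix

theorem l2_opNorm_transpose {m n : Type*} [Fintype m] [Fintype n] [DecidableEq m] [DecidableEq n]
    (M : Matrix m n ℝ) : ‖Mᵀ‖ = ‖M‖ := by
  rw [← conjTranspose_eq_transpose_of_trivial, l2_opNorm_conjTranspose]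

theorem l2_opNorm_mul_mul_le {l m n o : Type*} [Fintype l] [Fintype m] [Fintype n] [Fintype o]
    [DecidableEq m] [DecidableEq n] [DecidableEq o]
    (A : Matrix l m ℝ) (B : Matrix m n ℝ) (C : Matrix n o ℝ) : ‖A * B * C‖ ≤ ‖A‖ * ‖B‖ * ‖C‖ :=
  (l2_opNorm_mul _ _).trans (by gcongr; exact l2_opNorm_mul _ _)

theorem isUnit_of_rank_eq_card {m K : Type*} [Fintype m] [DecidableEq m] [Field K]
    {A : Matrix m m K} (h : A.rank = Fintype.card m) : IsUnit A :=
  linearIndependent_rows_iff_isUnit.1 <| linearIndependent_iff_card_eq_finrank_span.2 <| by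
    rw [Set.finrank, ← A.rank_eq_finrank_span_row, h]

theorem isUnit_mul_transpose_of_rank_eq_card {m n : Type*} [Fintype m] [Fintype n]
    [DecidableEq m] {A : Matrix m n ℝ} (h : A.rank = Fintype.card m) : IsUnit (A * Aᵀ) :=
  isUnit_of_rank_eq_card (by rw [rank_self_mul_transpose, h])

end Matrix

section PinvFR

variable {m n : Type*} [Fintype m] [Fintype n] [DecidableEq m]

theorem mul_pinvFR {A : Matrix m n ℝ} (hA : IsUnit (A * Aᵀ)) : A * pinvFR A = 1 := by
  rw [pinvFR, ← Matrix.mul_assoc, mul_nonsing_inv _ ((isUnit_iff_isUnit_det _).1 hA)]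

theorem transpose_pinvFR (A : Matrix m n ℝ) : (pinvFR A)ᵀ = (A * Aᵀ)⁻¹ * A := by
  rw [pinvFR, transpose_mul, transpose_nonsing_inv, transpose_mul, transpose_transpose]

theorem inv_mul_transpose_eq {A : Matrix m n ℝ} (hA : IsUnit (A * Aᵀ)) :
    (A * Aᵀ)⁻¹ = (pinvFR A)ᵀ * pinvFR A := by
  rw [transpose_pinvFR, Matrix.mul_assoc, mul_pinvFR hA, Matrix.mul_one]

theorem isStarProjection_pinvFR_mul {A : Matrix m n ℝ} (hA : IsUnit (A * Aᵀ)) :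
    IsStarProjection (pinvFR A * A) where
  isIdempotentElem := by
    rw [IsIdempotentElem, Matrix.mul_assoc, ← Matrix.mul_assoc A, mul_pinvFR hA, Matrix.one_mul]
  isSelfAdjoint := by
    rw [IsSelfAdjoint, star_eq_conjTranspose, conjTranspose_eq_transpose_of_trivial, transpose_mul,
      transpose_pinvFR, pinvFR, Matrix.mul_assoc]

variable [DecidableEq n]

theorem one_sub_pinvFR_mul_mul_transpose {A : Matrix m n ℝ} (hA : IsUnit (A * Aᵀ)) :
    (1 - pinvFR A * A) * Aᵀ = 0 := by
  rw [Matrix.sub_mul, Matrix.one_mul, pinvFR, Matrix.mul_assoc, Matrix.mul_assoc,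
    nonsing_inv_mul _ ((isUnit_iff_isUnit_det _).1 hA), Matrix.mul_one, sub_self]

theorem pinvFR_sub_pinvFR {A B : Matrix m n ℝ} (hA : IsUnit (A * Aᵀ)) (hB : IsUnit (B * Bᵀ)) :
    pinvFR B - pinvFR A =
      -(pinvFR B * (B - A) * pinvFR A) + (1 - pinvFR B * B) * (B - A)ᵀ * (A * Aᵀ)⁻¹ := by
  have first : pinvFR B * (B - A) * pinvFR A = pinvFR B * B * pinvFR A - pinvFR B := by
    rw [Matrix.mul_sub, Matrix.sub_mul, Matrix.mul_assoc _ A, mul_pinvFR hA, Matrix.mul_one]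
  have second : (1 - pinvFR B * B) * (B - A)ᵀ * (A * Aᵀ)⁻¹ =
      pinvFR B * B * pinvFR A - pinvFR A := by
    rw [transpose_sub, Matrix.mul_sub, one_sub_pinvFR_mul_mul_transpose hB, zero_sub,
      Matrix.neg_mul, Matrix.mul_assoc, ← pinvFR, Matrix.sub_mul, Matrix.one_mul, neg_sub]
  rw [first, second]
  abel

theorem l2_opNorm_one_sub_pinvFR_mul_le_one {A : Matrix m n ℝ} (hA : IsUnit (A * Aᵀ)) :
    ‖1 - pinvFR A * A‖ ≤ 1 :=
  (isStarProjection_pinvFR_mul hA).one_sub.norm_le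

theorem l2_opNorm_inv_mul_transpose_le {A : Matrix m n ℝ} (hA : IsUnit (A * Aᵀ)) :
    ‖(A * Aᵀ)⁻¹‖ ≤ ‖pinvFR A‖ ^ 2 := by
  rw [inv_mul_transpose_eq hA, sq]
  calc ‖(pinvFR A)ᵀ * pinvFR A‖ ≤ ‖(pinvFR A)ᵀ‖ * ‖pinvFR A‖ := l2_opNorm_mul _ _
    _ = ‖pinvFR A‖ * ‖pinvFR A‖ := by rw [l2_opNorm_transpose]

theorem l2_opNorm_pinvFR_sub_le {A B : Matrix m n ℝ} (hA : IsUnit (A * Aᵀ))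
    (hB : IsUnit (B * Bᵀ)) :
    ‖pinvFR B - pinvFR A‖ ≤
      ‖pinvFR B‖ * ‖B - A‖ * ‖pinvFR A‖ + ‖B - A‖ * ‖pinvFR A‖ ^ 2 := by
  rw [pinvFR_sub_pinvFR hA hB]
  refine (norm_add_le _ _).trans (add_le_add ?_ ?_)
  · rw [norm_neg]
    exact l2_opNorm_mul_mul_le _ _ _
  · calc ‖(1 - pinvFR B * B) * (B - A)ᵀ * (A * Aᵀ)⁻¹‖
        ≤ ‖1 - pinvFR B * B‖ * ‖(B - A)ᵀ‖ * ‖(A * Aᵀ)⁻¹‖ := l2_opNorm_mul_mul_le _ _ _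
      _ ≤ 1 * ‖B - A‖ * ‖pinvFR A‖ ^ 2 := by
        rw [l2_opNorm_transpose]
        gcongr
        exacts [l2_opNorm_one_sub_pinvFR_mul_le_one hB, l2_opNorm_inv_mul_transpose_le hA]
      _ = ‖B - A‖ * ‖pinvFR A‖ ^ 2 := by rw [one_mul]

end PinvFR

/-- Stewart's perturbation bound for pseudoinverses of full-row-rank matrices:
`‖(H+E)† − H†‖₂ ≤ 2 max{‖(H+E)†‖₂², ‖H†‖₂²} ‖E‖₂`. -/
theorem pinv_perturbation_bound {m n : ℕ} (H E : Matrix (Fin m) (Fin n) ℝ)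
    (hH : H.rank = m) (hHE : (H + E).rank = m) :
    specNorm (pinvFR (H + E) - pinvFR H) ≤
      2 * max (specNorm (pinvFR (H + E)) ^ 2) (specNorm (pinvFR H) ^ 2) * specNorm E := by
  have hA := isUnit_mul_transpose_of_rank_eq_card (hH.trans (Fintype.card_fin m).symm)
  have hB := isUnit_mul_transpose_of_rank_eq_card (hHE.trans (Fintype.card_fin m).symm)
  have bound := l2_opNorm_pinvFR_sub_le hA hB
  rw [add_sub_cancel_left] at bound
  simp only [specNorm_eq_l2_opNorm]
  set a := ‖pinvFR H‖
  set b := ‖pinvFR (H + E)‖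
  calc ‖pinvFR (H + E) - pinvFR H‖ ≤ b * a * ‖E‖ + a ^ 2 * ‖E‖ := by linarith
    _ ≤ max (b ^ 2) (a ^ 2) * ‖E‖ + max (b ^ 2) (a ^ 2) * ‖E‖ := by
      gcongr
      exacts [mul_le_max_sq, le_max_right _ _]
    _ = 2 * max (b ^ 2) (a ^ 2) * ‖E‖ := by ring
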